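/- arXiv:2306.11224 — 10 statements merged into one kernel-verified Lean document; each statement's English description precedes it below -/
import Mathlib

section
/- Weak duality for the PTE program: for any τ : ℝ, any TSP-feasible triple (π, Q, P) and any TGP-feasible pair (v, u) for τ satisfy τ * (∑ i, Q i + ∑ r, P r) ≤ ∑ i, v i * x o i - ∑ r, u r * y o r, i.e., the primal (total slack price) objective never exceeds the dual (total gap price) objective. -/
open Finset

/-- TSP-feasibility: `π, Q, P` nonnegative, input constraints
`(∑ j, x j i * π j) + Q i * x o i = x o i`, and output constraints
`∑ j, y j r * π j = (1 + P r) * y o r`. -/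
def TSPFeasible {n m s : ℕ} (x : Fin n → Fin m → ℝ) (y : Fin n → Fin s → ℝ)
    (o : Fin n) (π : Fin n → ℝ) (Q : Fin m → ℝ) (P : Fin s → ℝ) : Prop :=
  (∀ j, 0 ≤ π j) ∧ (∀ i, 0 ≤ Q i) ∧ (∀ r, 0 ≤ P r) ∧
  (∀ i, (∑ j, x j i * π j) + Q i * x o i = x o i) ∧
  (∀ r, ∑ j, y j r * π j = (1 + P r) * y o r)

/-- TGP-feasibility for `τ`: nonnegative virtual gap for every unit `j`,
and each virtual price of unit `o` bounded below by `τ`. -/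
def TGPFeasible {n m s : ℕ} (x : Fin n → Fin m → ℝ) (y : Fin n → Fin s → ℝ)
    (o : Fin n) (τ : ℝ) (v : Fin m → ℝ) (u : Fin s → ℝ) : Prop :=
  (∀ j, 0 ≤ ∑ i, v i * x j i - ∑ r, u r * y j r) ∧
  (∀ i, τ ≤ x o i * v i) ∧ (∀ r, τ ≤ y o r * u r)

/-! Substituting the TSP equality constraints into `Δ(v, u)` gives the identity
`Δ(v, u) = ∑ j, π j * gap j + ∑ i, Q i * (x o i * v i) + ∑ r, P r * (y o r * u r)`,
where `gap j ≥ 0` is the virtual gap of unit `j`. Every term is a nonnegative weight times a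
quantity that TGP-feasibility bounds below by `0` or by `τ`, so `Δ(v, u) ≥ τ * (∑ Q + ∑ P)`. -/

section WeightedSums

variable {ι κ : Type*} [Fintype ι] [Fintype κ]

theorem sum_mul_sum_mul_comm {R : Type*} [CommSemiring R] (a : ι → κ → R) (π : ι → R)
    (w : κ → R) : ∑ k, w k * ∑ j, a j k * π j = ∑ j, π j * ∑ k, w k * a j k := by
  simp_rw [mul_sum]
  rw [sum_comm]
  exact sum_congr rfl fun _ _ => sum_congr rfl fun _ _ => by ring

theorem mul_sum_le_sum_mul_of_le (w f : κ → ℝ) (τ : ℝ) (hw : ∀ k, 0 ≤ w k)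
    (hf : ∀ k, τ ≤ f k) : τ * ∑ k, w k ≤ ∑ k, w k * f k := by
  rw [mul_sum]
  exact sum_le_sum fun k _ => by
    rw [mul_comm]
    exact mul_le_mul_of_nonneg_left (hf k) (hw k)

end WeightedSums

section VirtualGap

variable {n m s : ℕ} (x : Fin n → Fin m → ℝ) (y : Fin n → Fin s → ℝ)

/-- The TGP objective `Δ(v, u)` is `virtualGap x y v u o`. -/
def virtualGap (v : Fin m → ℝ) (u : Fin s → ℝ) (j : Fin n) : ℝ :=
  ∑ i, v i * x j i - ∑ r, u r * y j r

theorem virtualGap_eq_of_tsp_constraints {o : Fin n} {π : Fin n → ℝ} {Q : Fin m → ℝ}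
    {P : Fin s → ℝ} (hin : ∀ i, (∑ j, x j i * π j) + Q i * x o i = x o i)
    (hout : ∀ r, ∑ j, y j r * π j = (1 + P r) * y o r) (v : Fin m → ℝ) (u : Fin s → ℝ) :
    virtualGap x y v u o = ∑ j, π j * virtualGap x y v u j
      + ∑ i, Q i * (x o i * v i) + ∑ r, P r * (y o r * u r) := by
  have hX : ∑ j, π j * ∑ i, v i * x j i = ∑ i, v i * x o i - ∑ i, Q i * (x o i * v i) := by
    rw [← sum_mul_sum_mul_comm, ← sum_sub_distrib]
    exact sum_congr rfl fun i _ => by linear_combination v i * hin i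
  have hY : ∑ j, π j * ∑ r, u r * y j r = ∑ r, u r * y o r + ∑ r, P r * (y o r * u r) := by
    rw [← sum_mul_sum_mul_comm, ← sum_add_distrib]
    exact sum_congr rfl fun r _ => by linear_combination u r * hout r
  simp only [virtualGap, mul_sub, sum_sub_distrib, hX, hY]
  ring

end VirtualGap

theorem pte_weak_duality_general
    (n m s : ℕ) (x : Fin n → Fin m → ℝ) (y : Fin n → Fin s → ℝ) (o : Fin n)
    (τ : ℝ) (π : Fin n → ℝ) (Q : Fin m → ℝ) (P : Fin s → ℝ)
    (v : Fin m → ℝ) (u : Fin s → ℝ)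
    (hTSP : TSPFeasible x y o π Q P) (hTGP : TGPFeasible x y o τ v u) :
    τ * (∑ i, Q i + ∑ r, P r) ≤ ∑ i, v i * x o i - ∑ r, u r * y o r := by
  obtain ⟨hπ, hQ, hP, hin, hout⟩ := hTSP
  obtain ⟨hgap, hv, hu⟩ := hTGP
  have hπgap : 0 ≤ ∑ j, π j * virtualGap x y v u j :=
    sum_nonneg fun j _ => mul_nonneg (hπ j) (hgap j)
  have hQτ := mul_sum_le_sum_mul_of_le Q _ τ hQ hv
  have hPτ := mul_sum_le_sum_mul_of_le P _ τ hP hu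
  change _ ≤ virtualGap x y v u o
  rw [virtualGap_eq_of_tsp_constraints x y hin hout, mul_add]
  linarith

/-- Weak duality for the PTE program. -/
theorem pte_weak_duality
    (n m s : ℕ) (x : Fin n → Fin m → ℝ) (y : Fin n → Fin s → ℝ) (o : Fin n)
    (hx : ∀ j i, 0 < x j i) (hy : ∀ j r, 0 < y j r)
    (τ : ℝ) (π : Fin n → ℝ) (Q : Fin m → ℝ) (P : Fin s → ℝ)
    (v : Fin m → ℝ) (u : Fin s → ℝ)
    (hTSP : TSPFeasible x y o π Q P) (hTGP : TGPFeasible x y o τ v u) :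
    τ * (∑ i, Q i + ∑ r, P r) ≤ ∑ i, v i * x o i - ∑ r, u r * y o r :=
  pte_weak_duality_general n m s x y o τ π Q P v u hTSP hTGP
end

section
/- The relative efficiency is between 0 and 1 (Criterion (i)): if m ≥ 1, s ≥ 1, τ > 0, and (v, u) is TGP-feasible for τ, then 0 < (∑ r, u r * y o r) / (∑ i, v i * x o i) ≤ 1. -/
open Finset

namespace TGPFeasible

variable {n m s : ℕ} {x : Fin n → Fin m → ℝ} {y : Fin n → Fin s → ℝ} {o : Fin n} {τ : ℝ}
  {v : Fin m → ℝ} {u : Fin s → ℝ}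

theorem output_value_le_input_value (h : TGPFeasible x y o τ v u) :
    ∑ r, u r * y o r ≤ ∑ i, v i * x o i :=
  sub_nonneg.mp (h.1 o)

theorem input_value_pos (h : TGPFeasible x y o τ v u) (hτ : 0 < τ) (hm : 1 ≤ m) :
    0 < ∑ i, v i * x o i :=
  haveI : NeZero m := ⟨by omega⟩
  Finset.sum_pos (fun i _ => mul_comm (x o i) (v i) ▸ hτ.trans_le (h.2.1 i)) univ_nonempty

theorem output_value_pos (h : TGPFeasible x y o τ v u) (hτ : 0 < τ) (hs : 1 ≤ s) :
    0 < ∑ r, u r * y o r :=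
  haveI : NeZero s := ⟨by omega⟩
  Finset.sum_pos (fun r _ => mul_comm (y o r) (u r) ▸ hτ.trans_le (h.2.2 r)) univ_nonempty

end TGPFeasible

theorem relative_efficiency_in_unit_interval_general
    (n m s : ℕ) (x : Fin n → Fin m → ℝ) (y : Fin n → Fin s → ℝ) (o : Fin n)
    (hm : 1 ≤ m) (hs : 1 ≤ s)
    (τ : ℝ) (hτ : 0 < τ) (v : Fin m → ℝ) (u : Fin s → ℝ)
    (hTGP : TGPFeasible x y o τ v u) :
    0 < (∑ r, u r * y o r) / (∑ i, v i * x o i) ∧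
      (∑ r, u r * y o r) / (∑ i, v i * x o i) ≤ 1 := by
  have hden := hTGP.input_value_pos hτ hm
  exact ⟨div_pos (hTGP.output_value_pos hτ hs) hden,
    (div_le_one hden).mpr hTGP.output_value_le_input_value⟩

/-- The relative efficiency is between 0 and 1 (Criterion (i)). -/
theorem relative_efficiency_in_unit_interval
    (n m s : ℕ) (x : Fin n → Fin m → ℝ) (y : Fin n → Fin s → ℝ) (o : Fin n)
    (hx : ∀ j i, 0 < x j i) (hy : ∀ j r, 0 < y j r)
    (hm : 1 ≤ m) (hs : 1 ≤ s)
    (τ : ℝ) (hτ : 0 < τ) (v : Fin m → ℝ) (u : Fin s → ℝ)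
    (hTGP : TGPFeasible x y o τ v u) :
    0 < (∑ r, u r * y o r) / (∑ i, v i * x o i) ∧
      (∑ r, u r * y o r) / (∑ i, v i * x o i) ≤ 1 :=
  relative_efficiency_in_unit_interval_general n m s x y o hm hs τ hτ v u hTGP
end

section
/- Bounds on the normalized relative inefficiency: if s ≥ 1, τ > 0, and (v, u) is TGP-feasible for τ with the normalization ∑ i, v i * x o i = 1, then 0 ≤ ∑ i, v i * x o i - ∑ r, u r * y o r ≤ 1 - s * τ < 1. -/
open Finset

namespace TGPFeasible

variable {n m s : ℕ} {x : Fin n → Fin m → ℝ} {y : Fin n → Fin s → ℝ} {o : Fin n} {τ : ℝ}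
  {v : Fin m → ℝ} {u : Fin s → ℝ}

theorem card_mul_le_virtual_output (h : TGPFeasible x y o τ v u) :
    (s : ℝ) * τ ≤ ∑ r, u r * y o r := by
  simpa [mul_comm] using card_nsmul_le_sum univ (fun r ↦ u r * y o r) τ
    fun r _ ↦ (h.2.2 r).trans_eq (mul_comm _ _)

theorem virtual_gap_le (h : TGPFeasible x y o τ v u) :
    ∑ i, v i * x o i - ∑ r, u r * y o r ≤ ∑ i, v i * x o i - s * τ :=
  sub_le_sub_left h.card_mul_le_virtual_output _

end TGPFeasible

theorem normalized_inefficiency_bounds_general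
    (n m s : ℕ) (x : Fin n → Fin m → ℝ) (y : Fin n → Fin s → ℝ) (o : Fin n)
    (hs : 1 ≤ s)
    (τ : ℝ) (hτ : 0 < τ) (v : Fin m → ℝ) (u : Fin s → ℝ)
    (hTGP : TGPFeasible x y o τ v u)
    (hnorm : ∑ i, v i * x o i = 1) :
    0 ≤ ∑ i, v i * x o i - ∑ r, u r * y o r ∧
      ∑ i, v i * x o i - ∑ r, u r * y o r ≤ 1 - (s : ℝ) * τ ∧
      1 - (s : ℝ) * τ < 1 := by
  have hsτ : 0 < (s : ℝ) * τ := mul_pos (by exact_mod_cast hs) hτ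
  exact ⟨hTGP.1 o, hnorm ▸ hTGP.virtual_gap_le, by linarith⟩

/-- Bounds on the normalized relative inefficiency. -/
theorem normalized_inefficiency_bounds
    (n m s : ℕ) (x : Fin n → Fin m → ℝ) (y : Fin n → Fin s → ℝ) (o : Fin n)
    (hx : ∀ j i, 0 < x j i) (hy : ∀ j r, 0 < y j r)
    (hs : 1 ≤ s)
    (τ : ℝ) (hτ : 0 < τ) (v : Fin m → ℝ) (u : Fin s → ℝ)
    (hTGP : TGPFeasible x y o τ v u)
    (hnorm : ∑ i, v i * x o i = 1) :
    0 ≤ ∑ i, v i * x o i - ∑ r, u r * y o r ∧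
      ∑ i, v i * x o i - ∑ r, u r * y o r ≤ 1 - (s : ℝ) * τ ∧
      1 - (s : ℝ) * τ < 1 :=
  normalized_inefficiency_bounds_general n m s x y o hs τ hτ v u hTGP hnorm
end

section
/- Optimality certificate via equal objective values: if (π, Q, P) is TSP-feasible, (v, u) is TGP-feasible for τ, and τ * (∑ i, Q i + ∑ r, P r) = ∑ i, v i * x o i - ∑ r, u r * y o r, then every TSP-feasible triple (π', Q', P') satisfies τ * (∑ i, Q' i + ∑ r, P' r) ≤ τ * (∑ i, Q i + ∑ r, P r), and every TGP-feasible pair (v', u') for τ satisfies ∑ i, v' i * x o i - ∑ r, u' r * y o r ≥ ∑ i, v i * x o i - ∑ r, u r * y o r. -/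
open Finset

/-!
Substituting the TSP constraints into the TGP objective gives, for every TSP-feasible
`(π, Q, P)` and every `(v, u)`,
`Δ(v, u) = ∑ j, π j * g j + ∑ i, Q i * (x o i * v i) + ∑ r, P r * (y o r * u r)`,
where `g j` is the virtual gap of unit `j`. For TGP-feasible `(v, u)` the first sum is nonnegative and the others are at least
`τ * ∑ i, Q i` and `τ * ∑ r, P r`, so `δ ≤ Δ` (weak duality). A feasible pair with equal
objective values is therefore optimal on both sides.
-/

section

variable {n m s : ℕ} {x : Fin n → Fin m → ℝ} {y : Fin n → Fin s → ℝ} {o : Fin n}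

lemma sum_input_eq {π : Fin n → ℝ} {Q : Fin m → ℝ}
    (hin : ∀ i, (∑ j, x j i * π j) + Q i * x o i = x o i) (v : Fin m → ℝ) :
    ∑ i, v i * x o i = ∑ j, π j * ∑ i, v i * x j i + ∑ i, Q i * (x o i * v i) := by
  calc ∑ i, v i * x o i = ∑ i, v i * ((∑ j, x j i * π j) + Q i * x o i) := by simp only [hin]
    _ = _ := by
      simp only [mul_add, sum_add_distrib, mul_sum]
      rw [sum_comm]
      congr 1 <;> refine sum_congr rfl fun _ _ => ?_
      · exact sum_congr rfl fun _ _ => by ring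
      · ring

lemma sum_output_eq {π : Fin n → ℝ} {P : Fin s → ℝ}
    (hout : ∀ r, ∑ j, y j r * π j = (1 + P r) * y o r) (u : Fin s → ℝ) :
    ∑ r, u r * y o r = ∑ j, π j * ∑ r, u r * y j r - ∑ r, P r * (y o r * u r) := by
  rw [eq_sub_iff_add_eq]
  calc ∑ r, u r * y o r + ∑ r, P r * (y o r * u r) = ∑ r, u r * ((1 + P r) * y o r) := by
        rw [← sum_add_distrib]; exact sum_congr rfl fun _ _ => by ring
    _ = _ := by
      simp only [← hout, mul_sum]
      rw [sum_comm]
      exact sum_congr rfl fun _ _ => sum_congr rfl fun _ _ => by ring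

theorem TSPFeasible.objective_eq {π : Fin n → ℝ} {Q : Fin m → ℝ} {P : Fin s → ℝ}
    (h : TSPFeasible x y o π Q P) (v : Fin m → ℝ) (u : Fin s → ℝ) :
    ∑ i, v i * x o i - ∑ r, u r * y o r =
      ∑ j, π j * (∑ i, v i * x j i - ∑ r, u r * y j r) +
        (∑ i, Q i * (x o i * v i) + ∑ r, P r * (y o r * u r)) := by
  rw [sum_input_eq h.2.2.2.1 v, sum_output_eq h.2.2.2.2 u]
  simp only [mul_sub, sum_sub_distrib]
  ring

theorem weak_duality {τ : ℝ} {π : Fin n → ℝ} {Q : Fin m → ℝ} {P : Fin s → ℝ}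
    {v : Fin m → ℝ} {u : Fin s → ℝ}
    (hTSP : TSPFeasible x y o π Q P) (hTGP : TGPFeasible x y o τ v u) :
    τ * (∑ i, Q i + ∑ r, P r) ≤ ∑ i, v i * x o i - ∑ r, u r * y o r := by
  rw [hTSP.objective_eq v u]
  obtain ⟨hπ, hQ, hP, -, -⟩ := hTSP
  obtain ⟨hgap, hv, hu⟩ := hTGP
  have gap_nonneg : 0 ≤ ∑ j, π j * (∑ i, v i * x j i - ∑ r, u r * y j r) :=
    sum_nonneg fun j _ => mul_nonneg (hπ j) (hgap j)
  have price_ge : τ * (∑ i, Q i + ∑ r, P r) ≤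
      ∑ i, Q i * (x o i * v i) + ∑ r, P r * (y o r * u r) := by
    rw [mul_add, mul_sum, mul_sum]
    refine add_le_add (sum_le_sum fun i _ => ?_) (sum_le_sum fun r _ => ?_)
    · rw [mul_comm τ]; exact mul_le_mul_of_nonneg_left (hv i) (hQ i)
    · rw [mul_comm τ]; exact mul_le_mul_of_nonneg_left (hu r) (hP r)
  linarith

end

theorem optimality_certificate_general
    (n m s : ℕ) (x : Fin n → Fin m → ℝ) (y : Fin n → Fin s → ℝ) (o : Fin n)
    (τ : ℝ) (π : Fin n → ℝ) (Q : Fin m → ℝ) (P : Fin s → ℝ)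
    (v : Fin m → ℝ) (u : Fin s → ℝ)
    (hTSP : TSPFeasible x y o π Q P) (hTGP : TGPFeasible x y o τ v u)
    (heq : τ * (∑ i, Q i + ∑ r, P r) = ∑ i, v i * x o i - ∑ r, u r * y o r) :
    (∀ π' Q' P', TSPFeasible x y o π' Q' P' →
      τ * (∑ i, Q' i + ∑ r, P' r) ≤ τ * (∑ i, Q i + ∑ r, P r)) ∧
    (∀ v' u', TGPFeasible x y o τ v' u' →
      ∑ i, v i * x o i - ∑ r, u r * y o r ≤ ∑ i, v' i * x o i - ∑ r, u' r * y o r) :=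
  ⟨fun _ _ _ h => heq ▸ weak_duality h hTGP, fun _ _ h => heq ▸ weak_duality hTSP h⟩

/-- Optimality certificate via equal objective values. -/
theorem optimality_certificate
    (n m s : ℕ) (x : Fin n → Fin m → ℝ) (y : Fin n → Fin s → ℝ) (o : Fin n)
    (hx : ∀ j i, 0 < x j i) (hy : ∀ j r, 0 < y j r)
    (τ : ℝ) (π : Fin n → ℝ) (Q : Fin m → ℝ) (P : Fin s → ℝ)
    (v : Fin m → ℝ) (u : Fin s → ℝ)
    (hTSP : TSPFeasible x y o π Q P) (hTGP : TGPFeasible x y o τ v u)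
    (heq : τ * (∑ i, Q i + ∑ r, P r) = ∑ i, v i * x o i - ∑ r, u r * y o r) :
    (∀ π' Q' P', TSPFeasible x y o π' Q' P' →
      τ * (∑ i, Q' i + ∑ r, P' r) ≤ τ * (∑ i, Q i + ∑ r, P r)) ∧
    (∀ v' u', TGPFeasible x y o τ v' u' →
      ∑ i, v i * x o i - ∑ r, u r * y o r ≤ ∑ i, v' i * x o i - ∑ r, u' r * y o r) :=
  optimality_certificate_general n m s x y o τ π Q P v u hTSP hTGP heq
end

section
/- Complementary slackness on intensities (Eq. (21), PTE case): if (π, Q, P) is TSP-feasible, (v, u) is TGP-feasible for τ, and their objective values are equal, i.e. τ * (∑ i, Q i + ∑ r, P r) = ∑ i, v i * x o i - ∑ r, u r * y o r, then for every j, (∑ i, v i * x j i - ∑ r, u r * y j r) * π j = 0; in particular, π j > 0 implies ∑ i, v i * x j i = ∑ r, u r * y j r. -/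
open Finset

/-!
Weak duality with its equality case. Pairing the TGP gaps with the TSP intensities and
exchanging the order of summation, the TSP constraints turn `∑ j, gap j * π j` into the TGP
objective minus `∑ i, Q i * (x o i * v i) + ∑ r, P r * (y o r * u r)`, and the TGP price bounds
make the latter at least the TSP objective `τ * (∑ i, Q i + ∑ r, P r)`. Equal objectives thus
force the sum of the nonnegative terms `gap j * π j` to be at most `0`, so each of them vanishes.
-/

theorem sum_sub_mul_eq_sum_mul_sub_sum_mul {ι κ μ R : Type*} [Fintype ι] [Fintype κ]
    [Fintype μ] [CommRing R] (x : ι → κ → R) (y : ι → μ → R) (v : κ → R) (u : μ → R)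
    (π : ι → R) :
    ∑ j, (∑ i, v i * x j i - ∑ r, u r * y j r) * π j =
      ∑ i, v i * ∑ j, x j i * π j - ∑ r, u r * ∑ j, y j r * π j := by
  simp only [sub_mul, sum_sub_distrib, sum_mul, mul_sum]
  rw [sum_comm (γ := κ), sum_comm (γ := μ)]
  simp only [mul_assoc, mul_left_comm]

theorem mul_sum_le_sum_mul_of_le_s9 {ι R : Type*} [Fintype ι] [CommSemiring R] [PartialOrder R]
    [IsOrderedRing R] {τ : R} {Q w : ι → R} (hQ : ∀ i, 0 ≤ Q i) (hw : ∀ i, τ ≤ w i) :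
    τ * ∑ i, Q i ≤ ∑ i, Q i * w i := by
  rw [mul_sum]
  exact sum_le_sum fun i _ => mul_comm τ (Q i) ▸ mul_le_mul_of_nonneg_left (hw i) (hQ i)

theorem TSPFeasible.sum_gap_mul_eq {n m s : ℕ} {x : Fin n → Fin m → ℝ}
    {y : Fin n → Fin s → ℝ} {o : Fin n} {π : Fin n → ℝ} {Q : Fin m → ℝ} {P : Fin s → ℝ}
    (h : TSPFeasible x y o π Q P) (v : Fin m → ℝ) (u : Fin s → ℝ) :
    ∑ j, (∑ i, v i * x j i - ∑ r, u r * y j r) * π j =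
      (∑ i, v i * x o i - ∑ r, u r * y o r) -
        (∑ i, Q i * (x o i * v i) + ∑ r, P r * (y o r * u r)) := by
  obtain ⟨-, -, -, hin, hout⟩ := h
  have hin' : ∀ i, ∑ j, x j i * π j = x o i - Q i * x o i := fun i => eq_sub_of_add_eq (hin i)
  rw [sum_sub_mul_eq_sum_mul_sub_sum_mul]
  simp only [hin', hout]
  have hx : ∀ i, v i * (x o i - Q i * x o i) = v i * x o i - Q i * (x o i * v i) :=
    fun i => by ring
  have hy : ∀ r, u r * ((1 + P r) * y o r) = u r * y o r + P r * (y o r * u r) :=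
    fun r => by ring
  simp only [hx, hy, sum_sub_distrib, sum_add_distrib]
  ring

theorem complementary_slackness_intensities_general
    (n m s : ℕ) (x : Fin n → Fin m → ℝ) (y : Fin n → Fin s → ℝ) (o : Fin n)
    (τ : ℝ) (π : Fin n → ℝ) (Q : Fin m → ℝ) (P : Fin s → ℝ)
    (v : Fin m → ℝ) (u : Fin s → ℝ)
    (hTSP : TSPFeasible x y o π Q P) (hTGP : TGPFeasible x y o τ v u)
    (heq : τ * (∑ i, Q i + ∑ r, P r) = ∑ i, v i * x o i - ∑ r, u r * y o r) :
    (∀ j, (∑ i, v i * x j i - ∑ r, u r * y j r) * π j = 0) ∧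
    (∀ j, 0 < π j → ∑ i, v i * x j i = ∑ r, u r * y j r) := by
  have hterm_nonneg : ∀ j ∈ univ, 0 ≤ (∑ i, v i * x j i - ∑ r, u r * y j r) * π j :=
    fun j _ => mul_nonneg (hTGP.1 j) (hTSP.1 j)
  have hsum_nonpos : ∑ j, (∑ i, v i * x j i - ∑ r, u r * y j r) * π j ≤ 0 := by
    rw [hTSP.sum_gap_mul_eq, ← heq]
    linarith [mul_sum_le_sum_mul_of_le_s9 hTSP.2.1 hTGP.2.1,
      mul_sum_le_sum_mul_of_le_s9 hTSP.2.2.1 hTGP.2.2]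
  have hzero : ∀ j, (∑ i, v i * x j i - ∑ r, u r * y j r) * π j = 0 := fun j =>
    (sum_eq_zero_iff_of_nonneg hterm_nonneg).1
      (le_antisymm hsum_nonpos (sum_nonneg hterm_nonneg)) j (mem_univ j)
  exact ⟨hzero, fun j hj => sub_eq_zero.1 ((mul_eq_zero.1 (hzero j)).resolve_right hj.ne')⟩

/-- Complementary slackness on intensities (Eq. (21), PTE case). -/
theorem complementary_slackness_intensities
    (n m s : ℕ) (x : Fin n → Fin m → ℝ) (y : Fin n → Fin s → ℝ) (o : Fin n)
    (hx : ∀ j i, 0 < x j i) (hy : ∀ j r, 0 < y j r)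
    (τ : ℝ) (π : Fin n → ℝ) (Q : Fin m → ℝ) (P : Fin s → ℝ)
    (v : Fin m → ℝ) (u : Fin s → ℝ)
    (hTSP : TSPFeasible x y o π Q P) (hTGP : TGPFeasible x y o τ v u)
    (heq : τ * (∑ i, Q i + ∑ r, P r) = ∑ i, v i * x o i - ∑ r, u r * y o r) :
    (∀ j, (∑ i, v i * x j i - ∑ r, u r * y j r) * π j = 0) ∧
    (∀ j, 0 < π j → ∑ i, v i * x j i = ∑ r, u r * y j r) :=
  complementary_slackness_intensities_general n m s x y o τ π Q P v u hTSP hTGP heq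
end

section
/- Complementary slackness on slacks (Eq. (22)): if (π, Q, P) is TSP-feasible, (v, u) is TGP-feasible for τ, and τ * (∑ i, Q i + ∑ r, P r) = ∑ i, v i * x o i - ∑ r, u r * y o r, then for every i, (v i * x o i - τ) * Q i = 0 and for every r, (u r * y o r - τ) * P r = 0; in particular Q i > 0 implies v i * x o i = τ, and P r > 0 implies u r * y o r = τ. -/
open Finset

/-! Pricing the TSP equality constraints with `(v, u)` writes the difference of the two sides
of the hypothesis as a sum of slack products `(vᵢ x_{oi} - τ) Qᵢ`, `(uᵣ y_{or} - τ) Pᵣ` and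
gap products `πⱼ (∑ᵢ vᵢ x_{ji} - ∑ᵣ uᵣ y_{jr})`. Feasibility makes each product nonnegative,
and the hypothesis makes their sum zero, so every product vanishes. -/

section SlackIdentities

variable {ι κ ρ : Type*} [Fintype ι] [Fintype κ] [Fintype ρ]

lemma sum_mul_input_slack {x : ι → κ → ℝ} {o : ι} {π : ι → ℝ} {Q : κ → ℝ}
    (hin : ∀ i, ∑ j, x j i * π j + Q i * x o i = x o i) (v : κ → ℝ) :
    ∑ i, v i * x o i * Q i = ∑ i, v i * x o i - ∑ j, π j * ∑ i, v i * x j i := by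
  have hterm : ∀ i, v i * x o i * Q i = v i * x o i - ∑ j, π j * (v i * x j i) := fun i => by
    have hpull : ∑ j, π j * (v i * x j i) = v i * ∑ j, x j i * π j := by
      rw [mul_sum]; exact sum_congr rfl fun j _ => by ring
    rw [hpull]
    linear_combination v i * hin i
  simp_rw [hterm, sum_sub_distrib, mul_sum]
  rw [sum_comm (γ := ι)]

lemma sum_mul_output_slack {y : ι → ρ → ℝ} {o : ι} {π : ι → ℝ} {P : ρ → ℝ}
    (hout : ∀ r, ∑ j, y j r * π j = (1 + P r) * y o r) (u : ρ → ℝ) :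
    ∑ r, u r * y o r * P r = ∑ j, π j * ∑ r, u r * y j r - ∑ r, u r * y o r := by
  have hterm : ∀ r, u r * y o r * P r = ∑ j, π j * (u r * y j r) - u r * y o r := fun r => by
    have hpull : ∑ j, π j * (u r * y j r) = u r * ∑ j, y j r * π j := by
      rw [mul_sum]; exact sum_congr rfl fun j _ => by ring
    rw [hpull]
    linear_combination -(u r * hout r)
  simp_rw [hterm, sum_sub_distrib, mul_sum]
  rw [sum_comm (γ := ι)]

lemma sum_slack_add_sum_slack_add_sum_gap {x : ι → κ → ℝ} {y : ι → ρ → ℝ} {o : ι}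
    {π : ι → ℝ} {Q : κ → ℝ} {P : ρ → ℝ}
    (hin : ∀ i, ∑ j, x j i * π j + Q i * x o i = x o i)
    (hout : ∀ r, ∑ j, y j r * π j = (1 + P r) * y o r) (τ : ℝ) (v : κ → ℝ) (u : ρ → ℝ) :
    ∑ i, (v i * x o i - τ) * Q i + ∑ r, (u r * y o r - τ) * P r
        + ∑ j, π j * (∑ i, v i * x j i - ∑ r, u r * y j r)
      = ∑ i, v i * x o i - ∑ r, u r * y o r - τ * (∑ i, Q i + ∑ r, P r) := by
  simp only [sub_mul, sum_sub_distrib, mul_sub, ← mul_sum, sum_mul_input_slack hin,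
    sum_mul_output_slack hout]
  ring

end SlackIdentities

theorem complementary_slackness_slacks_general
    (n m s : ℕ) (x : Fin n → Fin m → ℝ) (y : Fin n → Fin s → ℝ) (o : Fin n)
    (τ : ℝ) (π : Fin n → ℝ) (Q : Fin m → ℝ) (P : Fin s → ℝ)
    (v : Fin m → ℝ) (u : Fin s → ℝ)
    (hTSP : TSPFeasible x y o π Q P) (hTGP : TGPFeasible x y o τ v u)
    (heq : τ * (∑ i, Q i + ∑ r, P r) = ∑ i, v i * x o i - ∑ r, u r * y o r) :
    (∀ i, (v i * x o i - τ) * Q i = 0) ∧ (∀ r, (u r * y o r - τ) * P r = 0) ∧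
    (∀ i, 0 < Q i → v i * x o i = τ) ∧ (∀ r, 0 < P r → u r * y o r = τ) := by
  obtain ⟨hπ, hQ, hP, hin, hout⟩ := hTSP
  obtain ⟨hgap, hv, hu⟩ := hTGP
  have hidentity := sum_slack_add_sum_slack_add_sum_gap hin hout τ v u
  have hQterm : ∀ i ∈ univ, 0 ≤ (v i * x o i - τ) * Q i := fun i _ =>
    mul_nonneg (by linarith [hv i, mul_comm (x o i) (v i)]) (hQ i)
  have hPterm : ∀ r ∈ univ, 0 ≤ (u r * y o r - τ) * P r := fun r _ =>
    mul_nonneg (by linarith [hu r, mul_comm (y o r) (u r)]) (hP r)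
  have hgap_sum : 0 ≤ ∑ j, π j * (∑ i, v i * x j i - ∑ r, u r * y j r) :=
    sum_nonneg fun j _ => mul_nonneg (hπ j) (hgap j)
  have hQsum := sum_nonneg hQterm
  have hPsum := sum_nonneg hPterm
  have hQzero : ∀ i, (v i * x o i - τ) * Q i = 0 := fun i =>
    (sum_eq_zero_iff_of_nonneg hQterm).1 (by linarith) i (mem_univ i)
  have hPzero : ∀ r, (u r * y o r - τ) * P r = 0 := fun r =>
    (sum_eq_zero_iff_of_nonneg hPterm).1 (by linarith) r (mem_univ r)
  refine ⟨hQzero, hPzero, fun i hQi => ?_, fun r hPr => ?_⟩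
  · exact sub_eq_zero.1 ((mul_eq_zero.1 (hQzero i)).resolve_right hQi.ne')
  · exact sub_eq_zero.1 ((mul_eq_zero.1 (hPzero r)).resolve_right hPr.ne')

/-- Complementary slackness on slacks (Eq. (22)). -/
theorem complementary_slackness_slacks
    (n m s : ℕ) (x : Fin n → Fin m → ℝ) (y : Fin n → Fin s → ℝ) (o : Fin n)
    (hx : ∀ j i, 0 < x j i) (hy : ∀ j r, 0 < y j r)
    (τ : ℝ) (π : Fin n → ℝ) (Q : Fin m → ℝ) (P : Fin s → ℝ)
    (v : Fin m → ℝ) (u : Fin s → ℝ)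
    (hTSP : TSPFeasible x y o π Q P) (hTGP : TGPFeasible x y o τ v u)
    (heq : τ * (∑ i, Q i + ∑ r, P r) = ∑ i, v i * x o i - ∑ r, u r * y o r) :
    (∀ i, (v i * x o i - τ) * Q i = 0) ∧ (∀ r, (u r * y o r - τ) * P r = 0) ∧
    (∀ i, 0 < Q i → v i * x o i = τ) ∧ (∀ r, 0 < P r → u r * y o r = τ) :=
  complementary_slackness_slacks_general n m s x y o τ π Q P v u hTSP hTGP heq
end

section
/- Complementary slackness on intensities for the STE program (Eq. (21), STE case): if (π, Q, P) is STE-primal-feasible for κ, (v, u, w) is STE-dual-feasible for τ, and their objective values are equal, i.e. τ * (∑ i, Q i + ∑ r, P r) = ∑ i, v i * x o i - ∑ r, u r * y o r + κ * w, then for every j, (∑ i, v i * x j i - ∑ r, u r * y j r + w) * π j = 0; in particular, π j > 0 implies ∑ i, v i * x j i - ∑ r, u r * y j r + w = 0. -/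
open Finset

/-- STE-primal-feasibility: TSP-feasible plus the sum-of-intensities condition. -/
def STEPrimalFeasible {n m s : ℕ} (x : Fin n → Fin m → ℝ) (y : Fin n → Fin s → ℝ)
    (o : Fin n) (κ : ℝ) (π : Fin n → ℝ) (Q : Fin m → ℝ) (P : Fin s → ℝ) : Prop :=
  TSPFeasible x y o π Q P ∧ ∑ j, π j = κ

/-- STE-dual-feasibility for `τ`. -/
def STEDualFeasible {n m s : ℕ} (x : Fin n → Fin m → ℝ) (y : Fin n → Fin s → ℝ)
    (o : Fin n) (τ : ℝ) (v : Fin m → ℝ) (u : Fin s → ℝ) (w : ℝ) : Prop :=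
  (∀ j, 0 ≤ ∑ i, v i * x j i - ∑ r, u r * y j r + w) ∧
  (∀ i, τ ≤ x o i * v i) ∧ (∀ r, τ ≤ y o r * u r)

/-! Weak duality with an explicit gap. For a primal-feasible `(π, Q, P)` the intensity-weighted
dual slacks add up to the dual objective minus `∑ Q i x_oi v_i + ∑ P r y_or u_r`, and dual
feasibility bounds the latter below by the primal objective `τ (∑ Q + ∑ P)`. Equal objectives
thus force a sum of nonnegative products `slack_j * π_j` to vanish termwise. -/

theorem Finset.sum_sum_mul_mul_swap {ι κ R : Type*} [Fintype ι] [Fintype κ] [CommSemiring R]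
    (a : ι → κ → R) (c : κ → R) (π : ι → R) :
    ∑ j, (∑ i, c i * a j i) * π j = ∑ i, c i * ∑ j, a j i * π j := by
  simp only [sum_mul, mul_sum, mul_assoc]
  exact sum_comm

section

variable {n m s : ℕ} {x : Fin n → Fin m → ℝ} {y : Fin n → Fin s → ℝ} {o : Fin n}

theorem STEPrimalFeasible.sum_slack_mul_intensity {κ : ℝ} {π : Fin n → ℝ} {Q : Fin m → ℝ}
    {P : Fin s → ℝ} (hP : STEPrimalFeasible x y o κ π Q P) (v : Fin m → ℝ) (u : Fin s → ℝ)
    (w : ℝ) :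
    ∑ j, (∑ i, v i * x j i - ∑ r, u r * y j r + w) * π j
      = (∑ i, v i * x o i - ∑ r, u r * y o r + κ * w)
        - (∑ i, Q i * (x o i * v i) + ∑ r, P r * (y o r * u r)) := by
  obtain ⟨⟨-, -, -, hin, hout⟩, hκ⟩ := hP
  have hin' : ∀ i, ∑ j, x j i * π j = x o i - Q i * x o i := fun i => by linarith [hin i]
  simp only [add_mul, sub_mul, sum_add_distrib, sum_sub_distrib,
    sum_sum_mul_mul_swap, hin', hout, ← mul_sum, hκ]
  simp only [mul_sub, mul_add, one_mul, sum_sub_distrib, sum_add_distrib]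
  have hQsum : ∑ i, v i * (Q i * x o i) = ∑ i, Q i * (x o i * v i) :=
    sum_congr rfl fun i _ => by ring
  have hPsum : ∑ r, u r * (P r * y o r) = ∑ r, P r * (y o r * u r) :=
    sum_congr rfl fun r _ => by ring
  rw [hQsum, hPsum]
  ring

theorem STEDualFeasible.primal_objective_le {τ : ℝ} {v : Fin m → ℝ} {u : Fin s → ℝ} {w : ℝ}
    (hD : STEDualFeasible x y o τ v u w) {Q : Fin m → ℝ} {P : Fin s → ℝ}
    (hQ : ∀ i, 0 ≤ Q i) (hP : ∀ r, 0 ≤ P r) :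
    τ * (∑ i, Q i + ∑ r, P r) ≤ ∑ i, Q i * (x o i * v i) + ∑ r, P r * (y o r * u r) := by
  rw [mul_add, mul_sum, mul_sum]
  exact add_le_add
    (sum_le_sum fun i _ => by
      rw [mul_comm]; exact mul_le_mul_of_nonneg_left (hD.2.1 i) (hQ i))
    (sum_le_sum fun r _ => by
      rw [mul_comm]; exact mul_le_mul_of_nonneg_left (hD.2.2 r) (hP r))

end

theorem ste_complementary_slackness_intensities_general
    (n m s : ℕ) (x : Fin n → Fin m → ℝ) (y : Fin n → Fin s → ℝ) (o : Fin n)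
    (τ κ : ℝ) (π : Fin n → ℝ) (Q : Fin m → ℝ) (P : Fin s → ℝ)
    (v : Fin m → ℝ) (u : Fin s → ℝ) (w : ℝ)
    (hP : STEPrimalFeasible x y o κ π Q P)
    (hD : STEDualFeasible x y o τ v u w)
    (heq : τ * (∑ i, Q i + ∑ r, P r)
      = ∑ i, v i * x o i - ∑ r, u r * y o r + κ * w) :
    (∀ j, (∑ i, v i * x j i - ∑ r, u r * y j r + w) * π j = 0) ∧
    (∀ j, 0 < π j → ∑ i, v i * x j i - ∑ r, u r * y j r + w = 0) := by
  have hgap := hP.sum_slack_mul_intensity v u w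
  obtain ⟨⟨hπ, hQ, hPn, -, -⟩, -⟩ := hP
  have hterm : ∀ j ∈ univ, 0 ≤ (∑ i, v i * x j i - ∑ r, u r * y j r + w) * π j :=
    fun j _ => mul_nonneg (hD.1 j) (hπ j)
  have hsum : ∑ j, (∑ i, v i * x j i - ∑ r, u r * y j r + w) * π j = 0 := by
    refine le_antisymm ?_ (sum_nonneg hterm)
    rw [hgap, ← heq]
    linarith [hD.primal_objective_le hQ hPn]
  have hall := (sum_eq_zero_iff_of_nonneg hterm).1 hsum
  exact ⟨fun j => hall j (mem_univ j),
    fun j hj => (mul_eq_zero.1 (hall j (mem_univ j))).resolve_right hj.ne'⟩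

/-- Complementary slackness on intensities for the STE program (Eq. (21), STE case). -/
theorem ste_complementary_slackness_intensities
    (n m s : ℕ) (x : Fin n → Fin m → ℝ) (y : Fin n → Fin s → ℝ) (o : Fin n)
    (hx : ∀ j i, 0 < x j i) (hy : ∀ j r, 0 < y j r)
    (τ κ : ℝ) (π : Fin n → ℝ) (Q : Fin m → ℝ) (P : Fin s → ℝ)
    (v : Fin m → ℝ) (u : Fin s → ℝ) (w : ℝ)
    (hP : STEPrimalFeasible x y o κ π Q P)
    (hD : STEDualFeasible x y o τ v u w)
    (heq : τ * (∑ i, Q i + ∑ r, P r)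
      = ∑ i, v i * x o i - ∑ r, u r * y o r + κ * w) :
    (∀ j, (∑ i, v i * x j i - ∑ r, u r * y j r + w) * π j = 0) ∧
    (∀ j, 0 < π j → ∑ i, v i * x j i - ∑ r, u r * y j r + w = 0) :=
  ste_complementary_slackness_intensities_general n m s x y o τ κ π Q P v u w hP hD heq
end

section
/- The relative boundary efficiency of the benchmark equals 1 for the STE program (Criterion (ii), STE case): if (π, Q, P) is STE-primal-feasible for κ, (v, u, w) is STE-dual-feasible for τ, and τ * (∑ i, Q i + ∑ r, P r) = ∑ i, v i * x o i - ∑ r, u r * y o r + κ * w, then the benchmark targets x̂ i = x o i * (1 - Q i) and ŷ r = y o r * (1 + P r) satisfy ∑ i, v i * x̂ i - ∑ r, u r * ŷ r + κ * w = 0. -/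
open Finset

/-!
Weak duality. Substituting the primal constraints, the benchmark's dual value is the
`π`-weighted sum of the dual slacks of all units, hence nonnegative. Substituting instead the
assumed equality of objectives, it is `τ * (∑ Q + ∑ P)` minus the dual valuation of the slacks
`Q`, `P`, which is nonpositive because every virtual price of `o` is at least `τ`.
-/

theorem sum_mul_dual_slack_eq {ι α β : Type*} [Fintype ι] [Fintype α] [Fintype β]
    (x : ι → α → ℝ) (y : ι → β → ℝ) (π : ι → ℝ) {a : α → ℝ} {b : β → ℝ}
    (ha : ∀ i, ∑ j, x j i * π j = a i) (hb : ∀ r, ∑ j, y j r * π j = b r)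
    (v : α → ℝ) (u : β → ℝ) (w : ℝ) :
    ∑ j, π j * (∑ i, v i * x j i - ∑ r, u r * y j r + w)
      = ∑ i, v i * a i - ∑ r, u r * b r + (∑ j, π j) * w := by
  simp only [← ha, ← hb, mul_add, mul_sub, mul_sum, sum_add_distrib,
    sum_sub_distrib, sum_mul]
  rw [sum_comm (γ := α), sum_comm (γ := β)]
  congr 2 <;> exact sum_congr rfl fun _ _ => sum_congr rfl fun _ _ => by ring

theorem mul_sum_le_sum_mul_of_le_s14 {α : Type*} [Fintype α] {τ : ℝ} {c q : α → ℝ}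
    (hc : ∀ i, τ ≤ c i) (hq : ∀ i, 0 ≤ q i) : τ * ∑ i, q i ≤ ∑ i, c i * q i := by
  rw [mul_sum]
  exact sum_le_sum fun i _ => mul_le_mul_of_nonneg_right (hc i) (hq i)

section

variable {n m s : ℕ} {x : Fin n → Fin m → ℝ} {y : Fin n → Fin s → ℝ} {o : Fin n}

theorem STEPrimalFeasible.benchmark_dual_value_nonneg {κ : ℝ} {π : Fin n → ℝ}
    {Q : Fin m → ℝ} {P : Fin s → ℝ} (hP : STEPrimalFeasible x y o κ π Q P)
    {v : Fin m → ℝ} {u : Fin s → ℝ} {w : ℝ}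
    (hslack : ∀ j, 0 ≤ ∑ i, v i * x j i - ∑ r, u r * y j r + w) :
    0 ≤ ∑ i, v i * (x o i * (1 - Q i)) - ∑ r, u r * (y o r * (1 + P r)) + κ * w := by
  obtain ⟨⟨hπ, -, -, hin, hout⟩, hκ⟩ := hP
  have ha : ∀ i, ∑ j, x j i * π j = x o i * (1 - Q i) := fun i => by linarith [hin i]
  have hb : ∀ r, ∑ j, y j r * π j = y o r * (1 + P r) := fun r => by linarith [hout r]
  rw [← hκ, ← sum_mul_dual_slack_eq x y π ha hb]
  exact sum_nonneg fun j _ => mul_nonneg (hπ j) (hslack j)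

theorem STEDualFeasible.mul_sum_le {τ : ℝ} {v : Fin m → ℝ} {u : Fin s → ℝ} {w : ℝ}
    (hD : STEDualFeasible x y o τ v u w) {Q : Fin m → ℝ} {P : Fin s → ℝ}
    (hQ : ∀ i, 0 ≤ Q i) (hP : ∀ r, 0 ≤ P r) :
    τ * (∑ i, Q i + ∑ r, P r) ≤ ∑ i, v i * x o i * Q i + ∑ r, u r * y o r * P r := by
  obtain ⟨-, hv, hu⟩ := hD
  rw [mul_add]
  exact add_le_add (mul_sum_le_sum_mul_of_le_s14 (fun i => (hv i).trans_eq (mul_comm _ _)) hQ)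
    (mul_sum_le_sum_mul_of_le_s14 (fun r => (hu r).trans_eq (mul_comm _ _)) hP)

end

theorem ste_benchmark_boundary_efficiency_general
    (n m s : ℕ) (x : Fin n → Fin m → ℝ) (y : Fin n → Fin s → ℝ) (o : Fin n)
    (τ κ : ℝ) (π : Fin n → ℝ) (Q : Fin m → ℝ) (P : Fin s → ℝ)
    (v : Fin m → ℝ) (u : Fin s → ℝ) (w : ℝ)
    (hP : STEPrimalFeasible x y o κ π Q P)
    (hD : STEDualFeasible x y o τ v u w)
    (heq : τ * (∑ i, Q i + ∑ r, P r)
      = ∑ i, v i * x o i - ∑ r, u r * y o r + κ * w) :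
    ∑ i, v i * (x o i * (1 - Q i)) - ∑ r, u r * (y o r * (1 + P r)) + κ * w = 0 := by
  have hnonneg := hP.benchmark_dual_value_nonneg hD.1
  have hle := hD.mul_sum_le hP.1.2.1 hP.1.2.2.1
  have hsplit : ∑ i, v i * (x o i * (1 - Q i)) - ∑ r, u r * (y o r * (1 + P r)) + κ * w
      = τ * (∑ i, Q i + ∑ r, P r) - (∑ i, v i * x o i * Q i + ∑ r, u r * y o r * P r) := by
    simp only [heq, mul_sub, mul_add, mul_one, ← mul_assoc, sum_sub_distrib,
      sum_add_distrib]
    ring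
  linarith

/-- The relative boundary efficiency of the benchmark equals 1 (Criterion (ii), STE case). -/
theorem ste_benchmark_boundary_efficiency
    (n m s : ℕ) (x : Fin n → Fin m → ℝ) (y : Fin n → Fin s → ℝ) (o : Fin n)
    (hx : ∀ j i, 0 < x j i) (hy : ∀ j r, 0 < y j r)
    (τ κ : ℝ) (π : Fin n → ℝ) (Q : Fin m → ℝ) (P : Fin s → ℝ)
    (v : Fin m → ℝ) (u : Fin s → ℝ) (w : ℝ)
    (hP : STEPrimalFeasible x y o κ π Q P)
    (hD : STEDualFeasible x y o τ v u w)
    (heq : τ * (∑ i, Q i + ∑ r, P r)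
      = ∑ i, v i * x o i - ∑ r, u r * y o r + κ * w) :
    ∑ i, v i * (x o i * (1 - Q i)) - ∑ r, u r * (y o r * (1 + P r)) + κ * w = 0 :=
  ste_benchmark_boundary_efficiency_general n m s x y o τ κ π Q P v u w hP hD heq
end

section
/- Strong duality for the PTE program (Eq. (17)): if m ≥ 1, s ≥ 1 and τ > 0, then there exist a TSP-feasible triple (π, Q, P) and a TGP-feasible pair (v, u) for τ whose objective values are equal, τ * (∑ i, Q i + ∑ r, P r) = ∑ i, v i * x o i - ∑ r, u r * y o r; consequently (π, Q, P) maximizes the primal objective over TSP-feasible triples and (v, u) minimizes the dual objective over TGP-feasible pairs for τ, and the two optimal values coincide. -/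
/-!
Writing `t = (π, Q, P)`, TSP is the standard-form linear program `max c ⬝ t` subject to `t ≥ 0`,
`B t = d`, and writing `w = (v, -u)`, TGP is its dual `min d ⬝ w` subject to `c ≤ wᵀ B`. Positive
data and `m ≥ 1` make the primal feasible region a nonempty compact polytope, so the primal optimum
is attained. Farkas' lemma, which follows from Hahn–Banach separation once finitely generated cones
are known to be closed (conic Carathéodory), then produces a dual solution of the same value, and
weak duality makes both optimal.
-/

open Finset

open Function Matrix PointedCone

section ConicCaratheodory

variable {𝕜 ι E : Type*} [Field 𝕜] [LinearOrder 𝕜] [IsStrictOrderedRing 𝕜] [Fintype ι]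
  [AddCommGroup E] [Module 𝕜 E] (g : ι → E)

theorem mem_hull_range_iff {x : E} :
    x ∈ hull 𝕜 (Set.range g) ↔ ∃ t : ι → 𝕜, 0 ≤ t ∧ ∑ i, t i • g i = x := by
  rw [Submodule.mem_span_range_iff_exists_fun]
  constructor
  · rintro ⟨c, rfl⟩
    exact ⟨fun i => c i, fun i => (c i).2, by simp only [Nonneg.coe_smul]⟩
  · rintro ⟨t, ht, rfl⟩
    exact ⟨fun i => ⟨t i, ht i⟩, by simp only [Nonneg.mk_smul]⟩

theorem exists_sum_smul_eq_zero_of_not_linearIndepOn {S : Set ι} (hS : ¬LinearIndepOn 𝕜 g S) :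
    ∃ c : ι → 𝕜, ∑ i, c i • g i = 0 ∧ support c ⊆ S ∧ ∃ i, 0 < c i := by
  classical
  rw [← Set.coe_toFinset S, not_linearIndepOn_finset_iff] at hS
  obtain ⟨f, hf, i, hi, hfi⟩ := hS
  have hfS : ∑ i, S.indicator f i • g i = 0 := by
    rw [← hf, ← sum_subset (subset_univ _)]
    · exact sum_congr rfl fun j hj => by simp_all
    · intro j _ hj
      simp_all
  rcases hfi.lt_or_gt with hneg | hpos
  · exact ⟨-S.indicator f, by simp [neg_smul, hfS], by simp, i, by simp_all⟩
  · exact ⟨S.indicator f, hfS, Set.support_indicator_subset, i, by simp_all⟩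

theorem exists_support_ssubset_of_not_linearIndepOn {t : ι → 𝕜} (ht : 0 ≤ t)
    (hdep : ¬LinearIndepOn 𝕜 g (support t)) :
    ∃ t' : ι → 𝕜, 0 ≤ t' ∧ ∑ i, t' i • g i = ∑ i, t i • g i ∧ support t' ⊂ support t := by
  classical
  obtain ⟨c, hc, hsupp, hpos⟩ := exists_sum_smul_eq_zero_of_not_linearIndepOn g hdep
  obtain ⟨i₀, hi₀, hmin⟩ := (univ.filter (0 < c ·)).exists_min_image (fun i => t i / c i)
    (by obtain ⟨i, hi⟩ := hpos; exact ⟨i, by simpa using hi⟩)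
  rw [mem_filter] at hi₀
  -- the largest step along `-c` that keeps `t` nonnegative; it kills the coordinate `i₀`
  set r := t i₀ / c i₀
  have hr : 0 ≤ r := div_nonneg (ht i₀) hi₀.2.le
  refine ⟨t - r • c, fun i => ?_, ?_, ?_⟩
  · rcases lt_or_ge 0 (c i) with hci | hci
    · have := hmin i (by simpa using hci)
      rw [le_div_iff₀ hci] at this
      simpa using this
    · simpa using (mul_nonpos_of_nonneg_of_nonpos hr hci).trans (ht i)
  · simp [sub_smul, sum_sub_distrib, mul_smul, ← smul_sum, hc]
  · rw [Set.ssubset_iff_exists]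
    refine ⟨fun i hi => ?_, i₀, ?_, ?_⟩
    · by_contra h
      have : c i = 0 := by simpa using mt (@hsupp i) h
      simp_all
    · exact fun h => hi₀.2.ne' (by simpa [h] using @hsupp i₀)
    · simp [r, div_mul_cancel₀ _ hi₀.2.ne']

theorem exists_linearIndepOn_support {t : ι → 𝕜} (ht : 0 ≤ t) :
    ∃ t' : ι → 𝕜, 0 ≤ t' ∧ ∑ i, t' i • g i = ∑ i, t i • g i ∧ LinearIndepOn 𝕜 g (support t') := by
  induction hN : (support t).ncard using Nat.strong_induction_on generalizing t with
  | _ N ih =>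
  by_cases hli : LinearIndepOn 𝕜 g (support t)
  · exact ⟨t, ht, rfl, hli⟩
  obtain ⟨t₁, ht₁, hsum₁, hlt⟩ := exists_support_ssubset_of_not_linearIndepOn g ht hli
  obtain ⟨t', ht', hsum', hli'⟩ := ih _ (hN ▸ Set.ncard_lt_ncard hlt) ht₁ rfl
  exact ⟨t', ht', hsum'.trans hsum₁, hli'⟩

end ConicCaratheodory

section Separation

variable {ι E : Type*} [Fintype ι] [AddCommGroup E] [Module ℝ E] [TopologicalSpace E]
  [IsTopologicalAddGroup E] [ContinuousSMul ℝ E] [T2Space E]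

theorem isClosed_hull_range_of_linearIndependent {g : ι → E} (hg : LinearIndependent ℝ g) :
    IsClosed (hull ℝ (Set.range g) : Set E) := by
  have hL : Topology.IsClosedEmbedding (Fintype.linearCombination ℝ g) :=
    LinearMap.isClosedEmbedding_of_injective <| LinearMap.ker_eq_bot.mpr <|
      linearIndependent_iff_injective_fintypeLinearCombination.mp hg
  convert hL.isClosedMap _ (isClosed_Ici (a := (0 : ι → ℝ)))
  ext x
  simp [mem_hull_range_iff, Fintype.linearCombination_apply]

theorem isClosed_hull_range (g : ι → E) : IsClosed (hull ℝ (Set.range g) : Set E) := by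
  classical
  have hunion : (hull ℝ (Set.range g) : Set E) =
      ⋃ (S : Set ι) (_ : LinearIndepOn ℝ g S), hull ℝ (g '' S) := by
    ext b
    simp only [Set.mem_iUnion, SetLike.mem_coe]
    constructor
    · intro hb
      obtain ⟨t, ht, rfl⟩ := (mem_hull_range_iff g).mp hb
      obtain ⟨t', ht', hsum, hli⟩ := exists_linearIndepOn_support g ht
      refine ⟨support t', hli, hsum ▸ Submodule.sum_mem _ fun i _ => ?_⟩
      by_cases hi : t' i = 0
      · simp [hi]
      · exact (hull ℝ _).smul_mem (ht' i) (subset_hull ⟨i, hi, rfl⟩)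
    · rintro ⟨S, -, hb⟩
      exact Submodule.span_mono (Set.image_subset_range g S) hb
  rw [hunion]
  refine isClosed_iUnion_of_finite fun S => isClosed_iUnion_of_finite fun hS => ?_
  rw [Set.image_eq_range]
  exact isClosed_hull_range_of_linearIndependent hS

theorem exists_strongDual_nonneg_of_notMem_hull [LocallyConvexSpace ℝ E] (g : ι → E) {b : E}
    (hb : b ∉ hull ℝ (Set.range g)) :
    ∃ f : StrongDual ℝ E, (∀ i, 0 ≤ f (g i)) ∧ f b < 0 := by
  obtain ⟨f, hf, hfb⟩ :=
    ProperCone.hyperplane_separation_point ⟨hull ℝ (Set.range g), isClosed_hull_range g⟩ hb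
  exact ⟨f, fun i => hf _ (subset_hull ⟨i, rfl⟩), hfb⟩

end Separation

namespace Matrix

variable {ι κ : Type*} [Fintype ι]

theorem exists_vecMul_le_or_exists_nonneg_mulVec_eq_zero [Fintype κ] (M : Matrix κ ι ℝ)
    (e : ι → ℝ) :
    (∃ w, w ᵥ* M ≤ e) ∨ ∃ z, 0 ≤ z ∧ M *ᵥ z = 0 ∧ e ⬝ᵥ z < 0 := by
  classical
  let g : κ ⊕ κ ⊕ ι → ι → ℝ :=
    Sum.elim (fun k => M k) (Sum.elim (fun k => -M k) fun i => Pi.single i 1)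
  by_cases he : e ∈ hull ℝ (Set.range g)
  · obtain ⟨t, ht, rfl⟩ := (mem_hull_range_iff g).mp he
    have hsum : ∑ a, t a • g a =
        (t ∘ Sum.inl - t ∘ Sum.inr ∘ Sum.inl) ᵥ* M + t ∘ Sum.inr ∘ Sum.inr := by
      ext i
      simp [g, vecMul_eq_sum, Fintype.sum_sum_type, Pi.single_apply, sub_eq_add_neg, add_mul,
        sum_add_distrib, add_assoc]
    exact .inl ⟨_, hsum ▸ le_add_of_nonneg_right fun i => ht _⟩
  · obtain ⟨f, hf, hfe⟩ := exists_strongDual_nonneg_of_notMem_hull g he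
    set z : ι → ℝ := fun i => f (Pi.single i 1)
    have hfz : ∀ v, f v = v ⬝ᵥ z := fun v => by
      conv_lhs => rw [pi_eq_sum_univ' v]
      simp [dotProduct, z]
    refine .inr ⟨z, fun i => hf (Sum.inr (Sum.inr i)), funext fun k => ?_, hfz e ▸ hfe⟩
    have h₁ := hfz (M k) ▸ hf (Sum.inl k)
    have h₂ := hfz (-M k) ▸ hf (Sum.inr (Sum.inl k))
    simp only [neg_dotProduct] at h₂
    exact le_antisymm (by simpa [mulVec] using h₂) h₁

def nonnegSolutions (B : Matrix κ ι ℝ) (d : κ → ℝ) : Set (ι → ℝ) := {t | 0 ≤ t ∧ B *ᵥ t = d}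

variable {B : Matrix κ ι ℝ} {d : κ → ℝ} {c : ι → ℝ}

theorem dotProduct_le_of_mem_nonnegSolutions [Fintype κ] {t : ι → ℝ} {w : κ → ℝ}
    (ht : t ∈ B.nonnegSolutions d) (hw : c ≤ w ᵥ* B) : c ⬝ᵥ t ≤ d ⬝ᵥ w :=
  calc c ⬝ᵥ t ≤ (w ᵥ* B) ⬝ᵥ t := dotProduct_le_dotProduct_of_nonneg_right hw ht.1
    _ = d ⬝ᵥ w := by rw [← dotProduct_mulVec, ht.2, dotProduct_comm]

/- Farkas is applied to the system `c ≤ w ᵥ* B`, `d ⬝ᵥ w ≤ c ⬝ᵥ t₀`; a certificate `(z, ζ)` of its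
infeasibility would make `(ζ + 1)⁻¹ • (z + t₀)` a feasible point beating `t₀`. -/
theorem exists_dual_of_isMaxOn [Fintype κ] {t₀ : ι → ℝ} (ht₀ : t₀ ∈ B.nonnegSolutions d)
    (hmax : IsMaxOn (c ⬝ᵥ ·) (B.nonnegSolutions d) t₀) :
    ∃ w, c ≤ w ᵥ* B ∧ d ⬝ᵥ w = c ⬝ᵥ t₀ := by
  let M : Matrix κ (ι ⊕ Unit) ℝ := fromCols (-B) (of fun k _ => d k)
  rcases exists_vecMul_le_or_exists_nonneg_mulVec_eq_zero M (Sum.elim (-c) fun _ => c ⬝ᵥ t₀) with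
    ⟨w, hw⟩ | ⟨z, hz, hMz, hez⟩
  · have : w ᵥ* (of fun k (_ : Unit) => d k) = fun _ => d ⬝ᵥ w := by
      ext; simp [vecMul, dotProduct, mul_comm]
    rw [vecMul_fromCols, this, vecMul_neg, Sum.elim_le_elim_iff, neg_le_neg_iff] at hw
    exact ⟨w, hw.1, le_antisymm (hw.2 ()) (dotProduct_le_of_mem_nonnegSolutions ht₀ hw.1)⟩
  · exfalso
    set ζ := z (Sum.inr ())
    have hζ : 0 ≤ ζ := hz _
    rw [← Sum.elim_comp_inl_inr z] at hMz hez
    have hBz : B *ᵥ (z ∘ Sum.inl) = ζ • d := by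
      have : (of fun k (_ : Unit) => d k) *ᵥ (z ∘ Sum.inr) = ζ • d := by
        ext; simp [mulVec, dotProduct, mul_comm, ζ]
      rwa [fromCols_mulVec_sumElim, this, neg_mulVec, neg_add_eq_zero] at hMz
    have hcz : ζ * (c ⬝ᵥ t₀) < c ⬝ᵥ (z ∘ Sum.inl) := by
      have : (fun _ : Unit => c ⬝ᵥ t₀) ⬝ᵥ (z ∘ Sum.inr) = ζ * (c ⬝ᵥ t₀) := by
        simp [dotProduct, ζ, mul_comm]
      rw [sumElim_dotProduct_sumElim, neg_dotProduct, this] at hez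
      linarith
    have hζ₁ : 0 < ζ + 1 := by linarith
    let t := (ζ + 1)⁻¹ • (z ∘ Sum.inl + t₀)
    have ht : t ∈ B.nonnegSolutions d := by
      refine ⟨smul_nonneg (inv_nonneg.mpr hζ₁.le) (add_nonneg (fun i => hz _) ht₀.1), ?_⟩
      rw [mulVec_smul, mulVec_add, hBz, ht₀.2,
        show ζ • d + d = (ζ + 1) • d by rw [add_smul, one_smul], inv_smul_smul₀ hζ₁.ne']
    have : c ⬝ᵥ t₀ < c ⬝ᵥ t := by
      rw [dotProduct_smul, dotProduct_add, smul_eq_mul, lt_inv_mul_iff₀ hζ₁]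
      linarith
    exact (hmax ht).not_gt this

theorem exists_isMaxOn_of_isBounded (c : ι → ℝ) (hne : (B.nonnegSolutions d).Nonempty)
    (hbdd : Bornology.IsBounded (B.nonnegSolutions d)) :
    ∃ t₀ ∈ B.nonnegSolutions d, IsMaxOn (c ⬝ᵥ ·) (B.nonnegSolutions d) t₀ := by
  have hclosed : IsClosed (B.nonnegSolutions d) :=
    isClosed_Ici.inter (isClosed_eq (continuous_const.matrix_mulVec continuous_id) continuous_const)
  exact (Metric.isCompact_of_isClosed_isBounded hclosed hbdd).exists_isMaxOn hne
    (continuous_const.dotProduct continuous_id).continuousOn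

theorem exists_optimal_of_isBounded [Fintype κ] (c : ι → ℝ) (hne : (B.nonnegSolutions d).Nonempty)
    (hbdd : Bornology.IsBounded (B.nonnegSolutions d)) :
    ∃ t₀ ∈ B.nonnegSolutions d, ∃ w, c ≤ w ᵥ* B ∧ d ⬝ᵥ w = c ⬝ᵥ t₀ := by
  obtain ⟨t₀, ht₀, hmax⟩ := exists_isMaxOn_of_isBounded c hne hbdd
  exact ⟨t₀, ht₀, exists_dual_of_isMaxOn ht₀ hmax⟩

end Matrix

theorem exists_eq_sumElim_sumElim {α β γ δ : Type*} (t : α ⊕ β ⊕ γ → δ) :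
    ∃ f g h, t = Sum.elim f (Sum.elim g h) :=
  ⟨t ∘ Sum.inl, t ∘ Sum.inr ∘ Sum.inl, t ∘ Sum.inr ∘ Sum.inr, by ext (a | b | c) <;> rfl⟩

section PTE

variable {n m s : ℕ} (x : Fin n → Fin m → ℝ) (y : Fin n → Fin s → ℝ) (o : Fin n)

-- Columns are indexed by the TSP variables `(π, Q, P)`, rows by the input and output constraints.
def pteMatrix : Matrix (Fin m ⊕ Fin s) (Fin n ⊕ Fin m ⊕ Fin s) ℝ :=
  Matrix.fromBlocks (Matrix.of fun i j => x j i) (Matrix.fromCols (Matrix.diagonal (x o)) 0)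
    (Matrix.of fun r j => y j r) (Matrix.fromCols 0 (-Matrix.diagonal (y o)))

def pteRhs : Fin m ⊕ Fin s → ℝ := Sum.elim (x o) (y o)

def pteCost (τ : ℝ) : Fin n ⊕ Fin m ⊕ Fin s → ℝ := Sum.elim 0 fun _ => τ

theorem pteMatrix_mulVec (π : Fin n → ℝ) (Q : Fin m → ℝ) (P : Fin s → ℝ) :
    pteMatrix x y o *ᵥ Sum.elim π (Sum.elim Q P) =
      Sum.elim (fun i => ∑ j, x j i * π j + x o i * Q i)
        (fun r => ∑ j, y j r * π j - y o r * P r) := by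
  ext (i | r) <;> simp [pteMatrix, mulVec, dotProduct, diagonal_apply, sub_eq_add_neg]

theorem vecMul_pteMatrix (v : Fin m → ℝ) (w : Fin s → ℝ) :
    Sum.elim v w ᵥ* pteMatrix x y o =
      Sum.elim (fun j => ∑ i, v i * x j i + ∑ r, w r * y j r)
        (Sum.elim (fun i => v i * x o i) fun r => -(w r * y o r)) := by
  ext (j | i | r) <;> simp [pteMatrix, vecMul, dotProduct, diagonal_apply]

theorem tspFeasible_iff {π : Fin n → ℝ} {Q : Fin m → ℝ} {P : Fin s → ℝ} :
    TSPFeasible x y o π Q P ↔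
      Sum.elim π (Sum.elim Q P) ∈ (pteMatrix x y o).nonnegSolutions (pteRhs x y o) := by
  have hin : ∀ i, ∑ j, x j i * π j + x o i * Q i = x o i ↔
      ∑ j, x j i * π j + Q i * x o i = x o i := fun i => by rw [mul_comm (x o i)]
  have hout : ∀ r, ∑ j, y j r * π j - y o r * P r = y o r ↔
      ∑ j, y j r * π j = (1 + P r) * y o r := fun r => by constructor <;> intro h <;> linarith
  simp only [TSPFeasible, nonnegSolutions, Set.mem_ofPred_eq, pteMatrix_mulVec, pteRhs, Pi.le_def,
    funext_iff, Sum.forall, Sum.elim_inl, Sum.elim_inr, Pi.zero_apply, hin, hout]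
  tauto

theorem tgpFeasible_iff {τ : ℝ} {v : Fin m → ℝ} {u : Fin s → ℝ} :
    TGPFeasible x y o τ v u ↔ pteCost τ ≤ Sum.elim v (-u) ᵥ* pteMatrix x y o := by
  simp only [TGPFeasible, pteCost, vecMul_pteMatrix, Pi.le_def, Sum.forall, Sum.elim_inl,
    Sum.elim_inr, Pi.zero_apply, Pi.neg_apply, neg_mul, neg_neg, sum_neg_distrib, ← sub_eq_add_neg,
    mul_comm (v _), mul_comm (u _)]

theorem pteCost_dotProduct (τ : ℝ) (π : Fin n → ℝ) (Q : Fin m → ℝ) (P : Fin s → ℝ) :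
    pteCost τ ⬝ᵥ Sum.elim π (Sum.elim Q P) = τ * (∑ i, Q i + ∑ r, P r) := by
  simp [pteCost, dotProduct, Fintype.sum_sum_type, mul_add, mul_sum]

theorem pteRhs_dotProduct (v : Fin m → ℝ) (u : Fin s → ℝ) :
    pteRhs x y o ⬝ᵥ Sum.elim v (-u) = ∑ i, v i * x o i - ∑ r, u r * y o r := by
  simp [pteRhs, dotProduct, mul_comm, sub_eq_add_neg]

theorem tspFeasible_single : TSPFeasible x y o (Pi.single o 1) 0 0 := by
  refine ⟨fun j => by rw [Pi.single_apply]; positivity, fun _ => le_rfl, fun _ => le_rfl,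
    fun i => ?_, fun r => ?_⟩ <;> simp [Pi.single_apply]

theorem isBounded_nonnegSolutions_pteMatrix (hx : ∀ j i, 0 < x j i) (hy : ∀ j r, 0 < y j r)
    (i₀ : Fin m) : Bornology.IsBounded ((pteMatrix x y o).nonnegSolutions (pteRhs x y o)) := by
  set b : Fin n → ℝ := fun j => x o i₀ / x j i₀
  refine (Metric.isBounded_Icc 0
    (Sum.elim b (Sum.elim 1 fun r => (∑ j, y j r * b j) / y o r))).subset fun t ht => ⟨ht.1, ?_⟩
  obtain ⟨π, Q, P, rfl⟩ := exists_eq_sumElim_sumElim t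
  obtain ⟨hπ, hQ, hP, hin, hout⟩ := (tspFeasible_iff x y o).mpr ht
  have hxπ : ∀ i, 0 ≤ ∑ j, x j i * π j :=
    fun i => sum_nonneg fun j _ => mul_nonneg (hx j i).le (hπ j)
  have hπb : π ≤ b := fun j => by
    have := single_le_sum (fun j _ => mul_nonneg (hx j i₀).le (hπ j)) (mem_univ j)
    rw [le_div_iff₀ (hx j i₀), mul_comm]
    nlinarith [hin i₀, hQ i₀, hx o i₀]
  simp only [Pi.le_def, Sum.forall, Sum.elim_inl, Sum.elim_inr, Pi.one_apply]
  refine ⟨hπb, fun i => ?_, fun r => ?_⟩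
  · nlinarith [hin i, hxπ i, hx o i]
  · have : ∑ j, y j r * π j ≤ ∑ j, y j r * b j :=
      sum_le_sum fun j _ => mul_le_mul_of_nonneg_left (hπb j) (hy j r).le
    rw [le_div_iff₀ (hy o r)]
    nlinarith [hout r, hy o r]

end PTE

theorem pte_strong_duality_general
    (n m s : ℕ) (x : Fin n → Fin m → ℝ) (y : Fin n → Fin s → ℝ) (o : Fin n)
    (hx : ∀ j i, 0 < x j i) (hy : ∀ j r, 0 < y j r)
    (hm : 1 ≤ m) (τ : ℝ) :
    ∃ (π : Fin n → ℝ) (Q : Fin m → ℝ) (P : Fin s → ℝ)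
      (v : Fin m → ℝ) (u : Fin s → ℝ),
      TSPFeasible x y o π Q P ∧ TGPFeasible x y o τ v u ∧
      τ * (∑ i, Q i + ∑ r, P r) = ∑ i, v i * x o i - ∑ r, u r * y o r ∧
      (∀ π' Q' P', TSPFeasible x y o π' Q' P' →
        τ * (∑ i, Q' i + ∑ r, P' r) ≤ τ * (∑ i, Q i + ∑ r, P r)) ∧
      (∀ v' u', TGPFeasible x y o τ v' u' →
        ∑ i, v i * x o i - ∑ r, u r * y o r
          ≤ ∑ i, v' i * x o i - ∑ r, u' r * y o r) := by
  obtain ⟨t, ht, w, hw, hval⟩ := (pteMatrix x y o).exists_optimal_of_isBounded (pteCost τ)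
    ⟨_, (tspFeasible_iff x y o).mp (tspFeasible_single x y o)⟩
    (isBounded_nonnegSolutions_pteMatrix x y o hx hy ⟨0, hm⟩)
  obtain ⟨π, Q, P, rfl⟩ := exists_eq_sumElim_sumElim t
  obtain ⟨v, u, rfl⟩ : ∃ v u, w = Sum.elim v (-u) :=
    ⟨w ∘ Sum.inl, -(w ∘ Sum.inr), by ext (i | r) <;> simp⟩
  rw [pteCost_dotProduct, pteRhs_dotProduct] at hval
  refine ⟨π, Q, P, v, u, (tspFeasible_iff x y o).mpr ht, (tgpFeasible_iff x y o).mpr hw, hval.symm,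
    fun π' Q' P' h' => ?_, fun v' u' h' => ?_⟩
  · have := dotProduct_le_of_mem_nonnegSolutions ((tspFeasible_iff x y o).mp h') hw
    rwa [pteCost_dotProduct, pteRhs_dotProduct, hval] at this
  · have := dotProduct_le_of_mem_nonnegSolutions ht ((tgpFeasible_iff x y o).mp h')
    rwa [pteCost_dotProduct, pteRhs_dotProduct, ← hval] at this

/-- Strong duality for the PTE program (Eq. (17)). -/
theorem pte_strong_duality
    (n m s : ℕ) (x : Fin n → Fin m → ℝ) (y : Fin n → Fin s → ℝ) (o : Fin n)
    (hx : ∀ j i, 0 < x j i) (hy : ∀ j r, 0 < y j r)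
    (hm : 1 ≤ m) (hs : 1 ≤ s) (τ : ℝ) (hτ : 0 < τ) :
    ∃ (π : Fin n → ℝ) (Q : Fin m → ℝ) (P : Fin s → ℝ)
      (v : Fin m → ℝ) (u : Fin s → ℝ),
      TSPFeasible x y o π Q P ∧ TGPFeasible x y o τ v u ∧
      τ * (∑ i, Q i + ∑ r, P r) = ∑ i, v i * x o i - ∑ r, u r * y o r ∧
      (∀ π' Q' P', TSPFeasible x y o π' Q' P' →
        τ * (∑ i, Q' i + ∑ r, P' r) ≤ τ * (∑ i, Q i + ∑ r, P r)) ∧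
      (∀ v' u', TGPFeasible x y o τ v' u' →
        ∑ i, v i * x o i - ∑ r, u r * y o r
          ≤ ∑ i, v' i * x o i - ∑ r, u' r * y o r) :=
  pte_strong_duality_general n m s x y o hx hy hm τ
end

section
/- Efficient units have zero slacks and best return to practice equal to 1: if τ > 0 and there exists a TGP-feasible pair (v, u) for τ with zero total gap price, i.e. ∑ i, v i * x o i = ∑ r, u r * y o r, then every TSP-feasible triple (π, Q, P) satisfies Q i = 0 for all i and P r = 0 for all r, so that ∑ j, x j i * π j = x o i for every i and ∑ j, y j r * π j = y o r for every r; in particular the benchmark targets x̂ i = x o i * (1 - Q i) and ŷ r = y o r * (1 + P r) equal the observed values of unit o. -/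
open Finset

/-! Weighting the TGP gap constraints by the TSP intensities `π` and exchanging the order of
summation shows that the slacks, priced at unit `o`'s virtual prices, add up to the total gap
price of `o` minus the `π`-weighted gaps of all units. With zero total gap price this is `≤ 0`,
while every term is a nonnegative slack times a price `≥ τ > 0`; so all slacks vanish. -/

theorem eq_zero_of_sum_mul_nonpos {ι : Type*} [Fintype ι] {a w : ι → ℝ}
    (ha : ∀ i, 0 ≤ a i) (hw : ∀ i, 0 < w i) (h : ∑ i, a i * w i ≤ 0) (i : ι) : a i = 0 := by
  have hterm : ∀ k ∈ univ, 0 ≤ a k * w k := fun k _ => mul_nonneg (ha k) (hw k).le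
  have hsum : ∑ k, a k * w k = 0 := le_antisymm h (sum_nonneg hterm)
  exact (mul_eq_zero.mp ((sum_eq_zero_iff_of_nonneg hterm).mp hsum i (mem_univ i))).resolve_right
    (hw i).ne'

theorem sum_mul_sum_comm {ι κ : Type*} [Fintype ι] [Fintype κ]
    (π : ι → ℝ) (v : κ → ℝ) (a : ι → κ → ℝ) :
    ∑ j, π j * ∑ i, v i * a j i = ∑ i, v i * ∑ j, a j i * π j := by
  simp only [mul_sum]
  rw [sum_comm]
  exact sum_congr rfl fun _ _ => sum_congr rfl fun _ _ => by ring

section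

variable {n m s : ℕ} {x : Fin n → Fin m → ℝ} {y : Fin n → Fin s → ℝ} {o : Fin n}
  {π : Fin n → ℝ} {Q : Fin m → ℝ} {P : Fin s → ℝ}

theorem TSPFeasible.priced_slacks_eq (hTSP : TSPFeasible x y o π Q P)
    (v : Fin m → ℝ) (u : Fin s → ℝ) :
    ∑ i, Q i * (x o i * v i) + ∑ r, P r * (y o r * u r) =
      (∑ i, v i * x o i - ∑ r, u r * y o r) -
        ∑ j, π j * (∑ i, v i * x j i - ∑ r, u r * y j r) := by
  obtain ⟨-, -, -, hin, hout⟩ := hTSP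
  have hinputs : ∑ j, π j * ∑ i, v i * x j i =
      ∑ i, v i * x o i - ∑ i, Q i * (x o i * v i) := by
    rw [sum_mul_sum_comm, ← sum_sub_distrib]
    exact sum_congr rfl fun i _ => by rw [eq_sub_of_add_eq (hin i)]; ring
  have houtputs : ∑ j, π j * ∑ r, u r * y j r =
      ∑ r, u r * y o r + ∑ r, P r * (y o r * u r) := by
    rw [sum_mul_sum_comm, ← sum_add_distrib]
    exact sum_congr rfl fun r _ => by rw [hout r]; ring
  simp only [mul_sub, sum_sub_distrib, hinputs, houtputs]
  ring

theorem TSPFeasible.slacks_eq_zero (hTSP : TSPFeasible x y o π Q P) {τ : ℝ} (hτ : 0 < τ)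
    {v : Fin m → ℝ} {u : Fin s → ℝ} (hTGP : TGPFeasible x y o τ v u)
    (hzero : ∑ i, v i * x o i = ∑ r, u r * y o r) :
    (∀ i, Q i = 0) ∧ (∀ r, P r = 0) := by
  obtain ⟨hgap, hvτ, huτ⟩ := hTGP
  obtain ⟨hπ, hQnn, hPnn, -, -⟩ := id hTSP
  have hpriced : ∑ i, Q i * (x o i * v i) + ∑ r, P r * (y o r * u r) ≤ 0 := by
    rw [hTSP.priced_slacks_eq, hzero, sub_self, zero_sub, neg_nonpos]
    exact sum_nonneg fun j _ => mul_nonneg (hπ j) (hgap j)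
  have hQ : 0 ≤ ∑ i, Q i * (x o i * v i) :=
    sum_nonneg fun i _ => mul_nonneg (hQnn i) (hτ.le.trans (hvτ i))
  have hP : 0 ≤ ∑ r, P r * (y o r * u r) :=
    sum_nonneg fun r _ => mul_nonneg (hPnn r) (hτ.le.trans (huτ r))
  exact ⟨eq_zero_of_sum_mul_nonpos hQnn (fun i => hτ.trans_le (hvτ i)) (by linarith),
    eq_zero_of_sum_mul_nonpos hPnn (fun r => hτ.trans_le (huτ r)) (by linarith)⟩

end

theorem efficient_unit_zero_slacks_general
    (n m s : ℕ) (x : Fin n → Fin m → ℝ) (y : Fin n → Fin s → ℝ) (o : Fin n)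
    (τ : ℝ) (hτ : 0 < τ) (v : Fin m → ℝ) (u : Fin s → ℝ)
    (hTGP : TGPFeasible x y o τ v u)
    (hzero : ∑ i, v i * x o i = ∑ r, u r * y o r) :
    ∀ π Q P, TSPFeasible x y o π Q P →
      (∀ i, Q i = 0) ∧ (∀ r, P r = 0) ∧
      (∀ i, ∑ j, x j i * π j = x o i) ∧ (∀ r, ∑ j, y j r * π j = y o r) ∧
      (∀ i, x o i * (1 - Q i) = x o i) ∧ (∀ r, y o r * (1 + P r) = y o r) := by
  intro π Q P hTSP
  obtain ⟨hQ, hP⟩ := hTSP.slacks_eq_zero hτ hTGP hzero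
  obtain ⟨-, -, -, hin, hout⟩ := hTSP
  refine ⟨hQ, hP, fun i => ?_, fun r => ?_, fun i => ?_, fun r => ?_⟩
  · simpa [hQ i] using hin i
  · simpa [hP r] using hout r
  · simp [hQ i]
  · simp [hP r]

/-- Efficient units have zero slacks and best return to practice equal to 1. -/
theorem efficient_unit_zero_slacks
    (n m s : ℕ) (x : Fin n → Fin m → ℝ) (y : Fin n → Fin s → ℝ) (o : Fin n)
    (hx : ∀ j i, 0 < x j i) (hy : ∀ j r, 0 < y j r)
    (τ : ℝ) (hτ : 0 < τ) (v : Fin m → ℝ) (u : Fin s → ℝ)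
    (hTGP : TGPFeasible x y o τ v u)
    (hzero : ∑ i, v i * x o i = ∑ r, u r * y o r) :
    ∀ π Q P, TSPFeasible x y o π Q P →
      (∀ i, Q i = 0) ∧ (∀ r, P r = 0) ∧
      (∀ i, ∑ j, x j i * π j = x o i) ∧ (∀ r, ∑ j, y j r * π j = y o r) ∧
      (∀ i, x o i * (1 - Q i) = x o i) ∧ (∀ r, y o r * (1 + P r) = y o r) :=
  efficient_unit_zero_slacks_general n m s x y o τ hτ v u hTGP hzero
end
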